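/- Let D be the q-derivative operator and U multiplication by t on the polynomial ring ℤ[q][t]. Then for every natural number n, (D + U∘D∘U)^{n+1}(1) = (1+q·t^2)·D((D + U∘D∘U)^n(1)) + t·(D + U∘D∘U)^n(1) and (D + D∘U∘U)^{n+1}(1) = (1+q^2·t^2)·D((D + D∘U∘U)^n(1)) + (1+q)·t·(D + D∘U∘U)^n(1); consequently (D + U∘D∘U)^n(1) = Q_n(t,q) and (D + D∘U∘U)^n(1) = R_n(t,q). -/
import Mathlib


open Polynomial

/-- The q-integer `[m]_q = 1 + q + ⋯ + q^{m-1}` as a polynomial in `q` over `ℤ`. -/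
noncomputable def qnat (m : ℕ) : Polynomial ℤ := ∑ i ∈ Finset.range m, X ^ i

/-- The q-derivative on `ℤ[q][t]` (outer variable `t`, coefficients in `ℤ[q]`):
`D(t^m) = [m]_q · t^{m-1}`. -/
noncomputable def qD (p : Polynomial (Polynomial ℤ)) : Polynomial (Polynomial ℤ) :=
  p.sum fun m c => C (c * qnat m) * X ^ (m - 1)

/-- The operator `U`: multiplication by `t`. -/
noncomputable def opU (p : Polynomial (Polynomial ℤ)) : Polynomial (Polynomial ℤ) := X * p

/-- The q-analog `Q_n(t,q)`:
`Q_0 = 1`, `Q_{n+1} = (1+q·t²)·D(Q_n) + t·Q_n`. -/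
noncomputable def qPolyQ : ℕ → Polynomial (Polynomial ℤ)
  | 0 => 1
  | n + 1 => (1 + C (X : Polynomial ℤ) * X ^ 2) * qD (qPolyQ n) + X * qPolyQ n

/-- The q-analog `R_n(t,q)`:
`R_0 = 1`, `R_{n+1} = (1+q²·t²)·D(R_n) + (1+q)·t·R_n`. -/
noncomputable def qPolyR : ℕ → Polynomial (Polynomial ℤ)
  | 0 => 1
  | n + 1 => (1 + C ((X : Polynomial ℤ) ^ 2) * X ^ 2) * qD (qPolyR n)
      + (1 + C (X : Polynomial ℤ)) * X * qPolyR n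

lemma qD_monomial (n : ℕ) (a : Polynomial ℤ) :
    qD (monomial n a) = C (a * qnat n) * X ^ (n - 1) := by
  unfold qD
  rw [Polynomial.sum_monomial_index]
  simp

lemma qD_add (p q : Polynomial (Polynomial ℤ)) : qD (p + q) = qD p + qD q := by
  unfold qD
  rw [Polynomial.sum_add_index]
  · intro n; simp
  · intro n a b; rw [add_mul, C_add, add_mul]

lemma qnat_succ (m : ℕ) : qnat (m + 1) = 1 + X * qnat m := by
  unfold qnat
  rw [Finset.sum_range_succ']
  simp only [pow_succ, pow_zero, ← Finset.sum_mul]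
  ring

lemma qD_X_mul (p : Polynomial (Polynomial ℤ)) :
    qD (X * p) = p + C X * X * qD p := by
  induction p using Polynomial.induction_on' with
  | add p q hp hq => rw [mul_add, qD_add, hp, hq, qD_add]; ring
  | monomial n a =>
    rw [show (X : Polynomial (Polynomial ℤ)) * monomial n a = monomial (n + 1) a from by
      rw [X_mul_monomial], qD_monomial, qD_monomial]
    cases n with
    | zero =>
      simp [qnat]
    | succ m =>
      rw [qnat_succ]
      simp only [Nat.add_sub_cancel, C_add, C_mul, C_1, ← C_mul_X_pow_eq_monomial]
      ring

lemma keyQ (p : Polynomial (Polynomial ℤ)) :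
    qD p + opU (qD (opU p))
      = (1 + C (X : Polynomial ℤ) * X ^ 2) * qD p + X * p := by
  unfold opU
  rw [qD_X_mul]
  ring

lemma keyR (p : Polynomial (Polynomial ℤ)) :
    qD p + qD (opU (opU p))
      = (1 + C ((X : Polynomial ℤ) ^ 2) * X ^ 2) * qD p + (1 + C (X : Polynomial ℤ)) * X * p := by
  unfold opU
  rw [qD_X_mul, qD_X_mul, show C ((X : Polynomial ℤ) ^ 2) = C X * C X from by
    rw [← C_mul, sq]]
  ring

theorem stmt7 (n : ℕ) :
    ((fun p => qD p + opU (qD (opU p)))^[n + 1] 1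
        = (1 + C (X : Polynomial ℤ) * X ^ 2) * qD ((fun p => qD p + opU (qD (opU p)))^[n] 1)
          + X * (fun p => qD p + opU (qD (opU p)))^[n] 1) ∧
    ((fun p => qD p + qD (opU (opU p)))^[n + 1] 1
        = (1 + C ((X : Polynomial ℤ) ^ 2) * X ^ 2) * qD ((fun p => qD p + qD (opU (opU p)))^[n] 1)
          + (1 + C (X : Polynomial ℤ)) * X * (fun p => qD p + qD (opU (opU p)))^[n] 1) ∧
    (fun p => qD p + opU (qD (opU p)))^[n] 1 = qPolyQ n ∧
    (fun p => qD p + qD (opU (opU p)))^[n] 1 = qPolyR n := by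
  refine ⟨?_, ?_, ?_, ?_⟩
  · rw [Function.iterate_succ_apply']
    exact keyQ _
  · rw [Function.iterate_succ_apply']
    exact keyR _
  · induction n with
    | zero => rfl
    | succ m ih =>
      rw [Function.iterate_succ_apply', ih, qPolyQ]
      exact keyQ _
  · induction n with
    | zero => rfl
    | succ m ih =>
      rw [Function.iterate_succ_apply', ih, qPolyR]
      exact keyR _
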